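/- For every 2 × 2 matrix with nonnegative real entries a, b (first row) and c, d (second row), the scaling mean equals (√(ad) + √(bc))/2. -/

import Mathlib

open scoped BigOperators Kronecker
open Matrix

/-- The permanent of a square real matrix. -/
noncomputable def perm {ι : Type*} [Fintype ι] [DecidableEq ι] (A : Matrix ι ι ℝ) : ℝ :=
  ∑ σ : Equiv.Perm ι, ∏ i, A i (σ i)

/-- The permanental mean `pm A = (per A / n!) ^ (1/n)`. -/
noncomputable def pm {ι : Type*} [Fintype ι] [DecidableEq ι] (A : Matrix ι ι ℝ) : ℝ :=
  (perm A / (Nat.factorial (Fintype.card ι) : ℝ)) ^ ((Fintype.card ι : ℝ)⁻¹)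

/-- The geometric mean of the entries of a vector. -/
noncomputable def gmVec {ι : Type*} [Fintype ι] (v : ι → ℝ) : ℝ :=
  (∏ i, v i) ^ ((Fintype.card ι : ℝ)⁻¹)

/-- The set of values whose infimum defines the scaling mean. -/
noncomputable def smSet {ι κ : Type*} [Fintype ι] [Fintype κ] (A : Matrix ι κ ℝ) : Set ℝ :=
  {r : ℝ | ∃ x : ι → ℝ, ∃ y : κ → ℝ, (∀ i, 0 < x i) ∧ (∀ j, 0 < y j) ∧
    r = (∑ i, ∑ j, x i * A i j * y j) / (gmVec x * gmVec y)}

/-- The scaling mean `sm A = (1/(mn)) · inf over positive vectors x, y of xᵀAy/(gm x · gm y)`. -/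
noncomputable def sm {ι κ : Type*} [Fintype ι] [Fintype κ] (A : Matrix ι κ ℝ) : ℝ :=
  ((Fintype.card ι : ℝ) * (Fintype.card κ : ℝ))⁻¹ * sInf (smSet A)

/-! AM–GM applied to the pairs `x₀ a y₀, x₁ d y₁` and `x₀ b y₁, x₁ c y₀` bounds `xᵀAy` below by
`2 (√(ad) + √(bc)) · gm x · gm y`. For positive entries the bound is attained by the vectors that
balance each pair; zero entries are handled by increasing all entries by `ε` and letting `ε → 0`. -/

open Filter Topology

section General

variable {ι κ : Type*} [Fintype ι] [Fintype κ]

lemma gmVec_pos {x : ι → ℝ} (hx : ∀ i, 0 < x i) : 0 < gmVec x :=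
  Real.rpow_pos_of_pos (Finset.prod_pos fun i _ => hx i) _

lemma smSet_nonempty (A : Matrix ι κ ℝ) : (smSet A).Nonempty :=
  ⟨_, fun _ => 1, fun _ => 1, fun _ => one_pos, fun _ => one_pos, rfl⟩

lemma exists_mem_smSet_le_of_le {A A' : Matrix ι κ ℝ} (h : ∀ i j, A i j ≤ A' i j) {r' : ℝ}
    (hr' : r' ∈ smSet A') : ∃ r ∈ smSet A, r ≤ r' := by
  obtain ⟨x, y, hx, hy, rfl⟩ := hr'
  refine ⟨_, ⟨x, y, hx, hy, rfl⟩, ?_⟩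
  have hxy := mul_pos (gmVec_pos hx) (gmVec_pos hy)
  gcongr with i _ j _
  · exact (hy j).le
  · exact (hx i).le
  · exact h i j

end General

lemma gmVec_fin_two (v : Fin 2 → ℝ) : gmVec v = √(v 0 * v 1) := by
  rw [gmVec, Fintype.card_fin, Fin.prod_univ_two, Real.sqrt_eq_rpow]
  norm_num

lemma sum_mul_fin_two_mul (a b c d : ℝ) (x y : Fin 2 → ℝ) :
    ∑ i, ∑ j, x i * !![a, b; c, d] i j * y j =
      x 0 * a * y 0 + x 1 * d * y 1 + (x 0 * b * y 1 + x 1 * c * y 0) := by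
  simp only [Fin.sum_univ_two, of_apply, cons_val', cons_val_zero, cons_val_one, empty_val',
    cons_val_fin_one]
  ring

lemma two_mul_sqrt_mul_le_add {u v : ℝ} (hu : 0 ≤ u) (hv : 0 ≤ v) : 2 * √(u * v) ≤ u + v := by
  nlinarith [sq_nonneg (√u - √v), Real.sq_sqrt hu, Real.sq_sqrt hv, Real.sqrt_mul hu v]

lemma two_mul_sqrt_add_le_of_mem_smSet {a b c d r : ℝ} (ha : 0 ≤ a) (hb : 0 ≤ b) (hc : 0 ≤ c)
    (hd : 0 ≤ d) (hr : r ∈ smSet !![a, b; c, d]) : 2 * (√(a * d) + √(b * c)) ≤ r := by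
  obtain ⟨x, y, hx, hy, rfl⟩ := hr
  have hx0 := (hx 0).le; have hx1 := (hx 1).le; have hy0 := (hy 0).le; have hy1 := (hy 1).le
  set g := x 0 * x 1 * (y 0 * y 1)
  have hgm : gmVec x * gmVec y = √g := by
    rw [gmVec_fin_two, gmVec_fin_two, ← Real.sqrt_mul (by positivity)]
  have had := two_mul_sqrt_mul_le_add (u := x 0 * a * y 0) (v := x 1 * d * y 1) (by positivity)
    (by positivity)
  have hbc := two_mul_sqrt_mul_le_add (u := x 0 * b * y 1) (v := x 1 * c * y 0) (by positivity)
    (by positivity)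
  rw [show x 0 * a * y 0 * (x 1 * d * y 1) = a * d * g by ring, Real.sqrt_mul (by positivity)]
    at had
  rw [show x 0 * b * y 1 * (x 1 * c * y 0) = b * c * g by ring, Real.sqrt_mul (by positivity)]
    at hbc
  rw [sum_mul_fin_two_mul, le_div_iff₀ (mul_pos (gmVec_pos hx) (gmVec_pos hy)), hgm]
  linarith

lemma two_mul_sqrt_add_mem_smSet_of_pos {a b c d : ℝ} (ha : 0 < a) (hb : 0 < b) (hc : 0 < c)
    (hd : 0 < d) : 2 * (√(a * d) + √(b * c)) ∈ smSet !![a, b; c, d] := by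
  obtain ⟨p, hp, rfl⟩ : ∃ p, 0 < p ∧ a = p ^ 2 := ⟨√a, by positivity, (Real.sq_sqrt ha.le).symm⟩
  obtain ⟨q, hq, rfl⟩ : ∃ q, 0 < q ∧ b = q ^ 2 := ⟨√b, by positivity, (Real.sq_sqrt hb.le).symm⟩
  obtain ⟨r, hr, rfl⟩ : ∃ r, 0 < r ∧ c = r ^ 2 := ⟨√c, by positivity, (Real.sq_sqrt hc.le).symm⟩
  obtain ⟨s, hs, rfl⟩ : ∃ s, 0 < s ∧ d = s ^ 2 := ⟨√d, by positivity, (Real.sq_sqrt hd.le).symm⟩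
  -- these vectors make the two terms of each AM–GM pair equal
  refine ⟨![r * s, p * q], ![q * s, p * r], fun i => by fin_cases i <;> simp <;> positivity,
    fun j => by fin_cases j <;> simp <;> positivity, ?_⟩
  have hsq {u v : ℝ} (hu : 0 ≤ u) (hv : 0 ≤ v) : √(u ^ 2 * v ^ 2) = u * v := by
    rw [← mul_pow, Real.sqrt_sq (mul_nonneg hu hv)]
  have hgm : gmVec ![r * s, p * q] * gmVec ![q * s, p * r] = p * q * r * s := by
    rw [gmVec_fin_two, gmVec_fin_two, ← Real.sqrt_mul (by simp; positivity)]
    simp only [cons_val_zero, cons_val_one]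
    rw [show r * s * (p * q) * (q * s * (p * r)) = (p * q * r * s) ^ 2 by ring,
      Real.sqrt_sq (by positivity)]
  rw [sum_mul_fin_two_mul, hgm, hsq hp.le hs.le, hsq hq.le hr.le]
  simp only [cons_val_zero, cons_val_one]
  field_simp
  ring

theorem sInf_smSet_fin_two {a b c d : ℝ} (ha : 0 ≤ a) (hb : 0 ≤ b) (hc : 0 ≤ c) (hd : 0 ≤ d) :
    sInf (smSet !![a, b; c, d]) = 2 * (√(a * d) + √(b * c)) := by
  have hlb (r) (hr : r ∈ smSet !![a, b; c, d]) := two_mul_sqrt_add_le_of_mem_smSet ha hb hc hd hr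
  have hub : ∀ ε > 0, sInf (smSet !![a, b; c, d]) ≤
      2 * (√((a + ε) * (d + ε)) + √((b + ε) * (c + ε))) := by
    intro ε hε
    obtain ⟨r, hr, hle⟩ := exists_mem_smSet_le_of_le (A := !![a, b; c, d])
      (A' := !![a + ε, b + ε; c + ε, d + ε])
      (fun i j => by fin_cases i <;> fin_cases j <;> simp [hε.le])
      (two_mul_sqrt_add_mem_smSet_of_pos (by linarith) (by linarith) (by linarith) (by linarith))
    exact (csInf_le ⟨_, hlb⟩ hr).trans hle
  have hlim : Tendsto (fun ε => 2 * (√((a + ε) * (d + ε)) + √((b + ε) * (c + ε)))) (𝓝[>] 0)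
      (𝓝 (2 * (√(a * d) + √(b * c)))) := by
    have hcont : Continuous fun ε => 2 * (√((a + ε) * (d + ε)) + √((b + ε) * (c + ε))) := by
      fun_prop
    simpa using (hcont.tendsto 0).mono_left nhdsWithin_le_nhds
  exact le_antisymm (ge_of_tendsto hlim (eventually_nhdsWithin_of_forall hub))
    (le_csInf (smSet_nonempty _) hlb)

/-- The scaling mean of a nonnegative `2 × 2` matrix `[[a,b],[c,d]]`
equals `(√(ad) + √(bc))/2`. -/
theorem stmt_10 (a b c d : ℝ) (ha : 0 ≤ a) (hb : 0 ≤ b) (hc : 0 ≤ c) (hd : 0 ≤ d) :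
    sm !![a, b; c, d] = (Real.sqrt (a * d) + Real.sqrt (b * c)) / 2 := by
  rw [sm, sInf_smSet_fin_two ha hb hc hd, Fintype.card_fin]
  push_cast
  ring
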